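/- arXiv:1502.05340 — 2 statements merged into one kernel-verified Lean document; each statement's English description precedes it below -/
import Mathlib

section
/- For each n, as polynomials in y, \sum_{\pi \in S_n} y^{inv(\pi)} evaluated via the substitution scheme gives: the coefficient of x^n in \sum_{m \ge 0} [m]_{x(y-1)+1}! x^m equals \sum_{k} f_{n,k} y^k where f_{n,k} = \sum_{i=k}^{n-2} (-1)^{i+k} \binom{i}{k} \sum_{j=i}^{\binom{n-i}{2}} \binom{j}{i} m_{n-i, j} (for n \ge 2). -/
/-!
Prepending a letter to the Lehmer code shows `[m]_q! = ∑_{π ∈ S_m} q^{inv π}`. Substituting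
`q = 1 + x(y - 1)` and expanding binomially, the coefficient of `x^a y^k` in `[m]_q!` is
`(-1)^{a+k} C(a,k) ∑_π C(inv π, a) = (-1)^{a+k} C(a,k) ∑_j C(j,a) m_{m,j}`. The factor `x^m`
forces `a = n - m`; after putting `i = n - m`, the terms with `i < k` or `i > n - 2` vanish.
-/

open Finset Polynomial

/-- The number of inversions of a permutation of `[n]`. -/
def invCount {n : ℕ} (π : Equiv.Perm (Fin n)) : ℕ :=
  (Finset.univ.filter fun p : Fin n × Fin n => p.1 < p.2 ∧ π p.2 < π p.1).card

/-- The Mahonian number `m_{n,j}`. -/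
noncomputable def mahonian (n j : ℕ) : ℕ :=
  Nat.card {π : Equiv.Perm (Fin n) // invCount π = j}

/-- The q-factorial `[m]_q!` as a polynomial over `ℤ`. -/
noncomputable def qFactorial (m : ℕ) : Polynomial ℤ :=
  ∏ i ∈ Finset.range m, ∑ j ∈ Finset.range (i + 1), Polynomial.X ^ j

noncomputable def xVar : MvPolynomial (Fin 2) ℤ := MvPolynomial.X 0
noncomputable def yVar : MvPolynomial (Fin 2) ℤ := MvPolynomial.X 1

/-- The Fishburn coefficient `f_{n,k}`: the coefficient of `x^n y^k` in
`∑_{m ≥ 0} [m]_{x(y-1)+1}! x^m` (terms with `m > n` do not contribute to the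
coefficient of `x^n`, so the sum may be truncated at `m = n`). -/
noncomputable def fishburnCoeff (n k : ℕ) : ℤ :=
  MvPolynomial.coeff (Finsupp.single 0 n + Finsupp.single 1 k)
    (∑ m ∈ Finset.range (n + 1),
      Polynomial.aeval (xVar * (yVar - 1) + 1) (qFactorial m) * xVar ^ m)

section Inversions

open Equiv

/-- The permutation `0 ↦ v`, `i + 1 ↦ v.succAbove (e i)`: prepending the letter `v` to the
Lehmer code of `e`. -/
noncomputable def permCons {n : ℕ} (v : Fin (n + 1)) (e : Perm (Fin n)) : Perm (Fin (n + 1)) :=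
  (Fin.cycleRange v)⁻¹ * Perm.decomposeFin.symm (0, e)

@[simp]
lemma permCons_apply_zero {n : ℕ} (v : Fin (n + 1)) (e : Perm (Fin n)) : permCons v e 0 = v := by
  simp [permCons, Perm.inv_def]

@[simp]
lemma permCons_apply_succ {n : ℕ} (v : Fin (n + 1)) (e : Perm (Fin n)) (i : Fin n) :
    permCons v e i.succ = v.succAbove (e i) := by
  simp [permCons, Perm.inv_def]

lemma permCons_bijective (n : ℕ) :
    Function.Bijective fun p : Fin (n + 1) × Perm (Fin n) => permCons p.1 p.2 := by
  refine (Fintype.bijective_iff_injective_and_card _).2 ⟨?_, ?_⟩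
  · rintro ⟨v, e⟩ ⟨v', e'⟩ h
    have hv : v = v' := by simpa using congr($h 0)
    subst hv
    refine Prod.ext rfl (Equiv.ext fun i => v.succAbove_right_injective ?_)
    simpa using congr($h i.succ)
  · simp [Fintype.card_perm, Nat.factorial_succ]

lemma invCount_eq_sum {n : ℕ} (π : Perm (Fin n)) :
    invCount π = ∑ a, ∑ b, if a < b ∧ π b < π a then 1 else 0 := by
  rw [invCount, card_filter, Fintype.sum_prod_type]

lemma Fin.card_filter_castSucc_lt {n : ℕ} (v : Fin (n + 1)) :
    #{w : Fin n | w.castSucc < v} = v := by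
  have h := Fin.card_Iio v
  rw [← filter_gt_eq_Iio, card_filter, Fin.sum_univ_castSucc] at h
  rw [card_filter]
  simpa [Fin.not_lt.2 (Fin.le_last v)] using h

lemma invCount_permCons {n : ℕ} (v : Fin (n + 1)) (e : Perm (Fin n)) :
    invCount (permCons v e) = v + invCount e := by
  rw [invCount_eq_sum, invCount_eq_sum]
  simp only [Fin.sum_univ_succ, permCons_apply_zero, permCons_apply_succ, false_and, if_false,
    Fin.succ_pos, true_and, Fin.succAbove_lt_iff_castSucc_lt, Fin.not_lt_zero, Fin.succ_lt_succ_iff,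
    Fin.succAbove_lt_succAbove_iff, zero_add]
  rw [← Fin.card_filter_castSucc_lt v, card_filter]
  exact congrArg (· + _) (Equiv.sum_comp e fun w => if w.castSucc < v then 1 else 0)

lemma qFactorial_eq_sum_perm (m : ℕ) : qFactorial m = ∑ π : Perm (Fin m), X ^ invCount π := by
  induction m with
  | zero => simp [qFactorial, invCount]
  | succ m ih =>
    rw [qFactorial, prod_range_succ, ← qFactorial, ih, mul_comm, sum_mul_sum,
      ← Fintype.sum_bijective _ (permCons_bijective m) _ _ fun _ => rfl, Fintype.sum_prod_type,
      ← Fin.sum_univ_eq_sum_range]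
    simp only [invCount_permCons, pow_add]

lemma invCount_le_choose_two {m : ℕ} (π : Perm (Fin m)) : invCount π ≤ m.choose 2 := by
  calc invCount π ≤ #{p : Fin m × Fin m | p.1 < p.2} :=
        card_le_card (monotone_filter_right univ fun _ _ h => h.1)
    _ = m.choose 2 := by rw [Fintype.card_product_filter_lt, Fintype.card_fin]

lemma sum_comp_invCount {M : Type*} [AddCommMonoid M] (m : ℕ) (f : ℕ → M) :
    ∑ π : Perm (Fin m), f (invCount π) =
      ∑ j ∈ range (m.choose 2 + 1), mahonian m j • f j := by
  rw [← sum_fiberwise_of_maps_to fun π _ => mem_range_succ_iff.2 (invCount_le_choose_two π)]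
  refine sum_congr rfl fun j _ => ?_
  rw [sum_congr rfl fun π hπ => congrArg f (mem_filter.1 hπ).2, sum_const, mahonian,
    Nat.card_eq_fintype_card, Fintype.card_subtype]

lemma sum_perm_choose_invCount (m a : ℕ) :
    ∑ π : Perm (Fin m), (invCount π).choose a =
      ∑ j ∈ Icc a (m.choose 2), j.choose a * mahonian m j := by
  simp_rw [sum_comp_invCount m (·.choose a), smul_eq_mul, mul_comm (mahonian m _)]
  refine (sum_subset (fun j hj => mem_range_succ_iff.2 (mem_Icc.1 hj).2) fun j hj hja => ?_).symm
  rw [Nat.choose_eq_zero_of_lt, zero_mul]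
  simpa [mem_range_succ_iff.1 hj] using hja

end Inversions

namespace MvPolynomial

variable {R σ : Type*} [CommRing R] {i j : σ}

lemma single_add_single_inj (hij : i ≠ j) {a b c d : ℕ} :
    Finsupp.single i a + Finsupp.single j b = Finsupp.single i c + Finsupp.single j d ↔
      a = c ∧ b = d := by
  refine ⟨fun h => ⟨?_, ?_⟩, fun ⟨hac, hbd⟩ => hac ▸ hbd ▸ rfl⟩
  · simpa [hij] using DFunLike.congr_fun h i
  · simpa [hij.symm] using DFunLike.congr_fun h j

lemma coeff_mul_X_pow_of_le (p : MvPolynomial σ R) {m n : ℕ} (k : ℕ) (hm : m ≤ n) :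
    coeff (Finsupp.single i n + Finsupp.single j k) (p * X i ^ m) =
      coeff (Finsupp.single i (n - m) + Finsupp.single j k) p := by
  rw [X_pow_eq_monomial, ← mul_one (coeff _ p), ← coeff_mul_monomial, add_right_comm,
    ← Finsupp.single_add, Nat.sub_add_cancel hm]

lemma coeff_X_mul_X_sub_one_add_one_pow (hij : i ≠ j) (J a k : ℕ) :
    coeff (Finsupp.single i a + Finsupp.single j k)
        ((X i * (X j - 1) + 1 : MvPolynomial σ R) ^ J) =
      (-1 : R) ^ (a + k) * (J.choose a * a.choose k : ℕ) := by
  have expand : (X i * (X j - 1) + 1 : MvPolynomial σ R) ^ J = ∑ b ∈ range (J + 1),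
      ∑ c ∈ range (b + 1), monomial (Finsupp.single i b + Finsupp.single j c)
        ((-1 : R) ^ (b + c) * (J.choose b * b.choose c : ℕ)) := by
    simp only [add_pow, mul_pow, sub_pow, one_pow, mul_one, sum_mul, mul_sum]
    refine sum_congr rfl fun b _ => sum_congr rfl fun c _ => ?_
    rw [← mul_one ((-1 : R) ^ _ * _), ← monomial_mul, ← C_mul_X_pow_eq_monomial,
      ← X_pow_eq_monomial]
    simp only [map_mul, map_pow, map_neg, map_one, map_natCast, Nat.cast_mul]
    ring
  classical
  simp only [expand, coeff_sum, coeff_monomial, single_add_single_inj hij, ite_and]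
  rw [sum_eq_single a (fun b _ hb => sum_eq_zero fun c _ => if_neg hb) fun ha => ?_]
  · simp only [if_true]
    rw [sum_eq_single k (fun c _ hc => if_neg hc) fun hk => ?_, if_pos rfl]
    simp [Nat.choose_eq_zero_of_lt (not_lt.1 (mem_range.not.1 hk))]
  · simp [Nat.choose_eq_zero_of_lt (not_lt.1 (mem_range.not.1 ha))]

end MvPolynomial

open MvPolynomial in
lemma coeff_aeval_qFactorial {R σ : Type*} [CommRing R] {i j : σ} (hij : i ≠ j) (m a k : ℕ) :
    coeff (Finsupp.single i a + Finsupp.single j k)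
      (aeval (X i * (X j - 1) + 1 : MvPolynomial σ R) (qFactorial m)) =
      (-1) ^ (a + k) * a.choose k *
        ∑ l ∈ Icc a (m.choose 2), (l.choose a * mahonian m l : R) := by
  simp only [qFactorial_eq_sum_perm, map_sum, map_pow, Polynomial.aeval_X, MvPolynomial.coeff_sum,
    coeff_X_mul_X_sub_one_add_one_pow hij]
  rw [← mul_sum, mul_assoc, ← Nat.cast_sum, ← sum_mul, sum_perm_choose_invCount]
  push_cast
  ring

theorem fishburnCoeff_eq_general (n k : ℕ) :
    fishburnCoeff n k =
      ∑ i ∈ Finset.Icc k (n - 2), (-1 : ℤ) ^ (i + k) * (i.choose k : ℤ) *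
        ∑ j ∈ Finset.Icc i ((n - i).choose 2), (j.choose i : ℤ) * (mahonian (n - i) j : ℤ) := by
  have reflected : fishburnCoeff n k =
      ∑ i ∈ range (n + 1), (-1 : ℤ) ^ (i + k) * (i.choose k : ℤ) *
        ∑ j ∈ Icc i ((n - i).choose 2), (j.choose i : ℤ) * (mahonian (n - i) j : ℤ) := by
    rw [fishburnCoeff, xVar, yVar, MvPolynomial.coeff_sum, ← sum_range_reflect]
    refine sum_congr rfl fun i hi => ?_
    have hin : i ≤ n := mem_range_succ_iff.1 hi
    rw [MvPolynomial.coeff_mul_X_pow_of_le _ _ (by omega), coeff_aeval_qFactorial (by decide),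
      Nat.add_sub_cancel, Nat.sub_sub_self hin]
  rw [reflected]
  refine (sum_subset (fun i hi => mem_range_succ_iff.2 ((mem_Icc.1 hi).2.trans (n.sub_le 2)))
    fun i _ hi => ?_).symm
  obtain hik | hni : i < k ∨ n - 2 < i := by
    rw [mem_Icc, not_and_or, not_le, not_le] at hi; exact hi
  · rw [Nat.choose_eq_zero_of_lt hik, Nat.cast_zero, mul_zero, zero_mul]
  · rw [Nat.choose_eq_zero_of_lt (by omega : n - i < 2), Icc_eq_empty (by omega), sum_empty,
      mul_zero]

/-- `f_{n,k} = ∑_{i=k}^{n-2} (-1)^{i+k} C(i,k) ∑_{j=i}^{C(n-i,2)} C(j,i) m_{n-i,j}`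
for `n ≥ 2`. -/
theorem fishburnCoeff_eq (n k : ℕ) (hn : 2 ≤ n) :
    fishburnCoeff n k =
      ∑ i ∈ Finset.Icc k (n - 2), (-1 : ℤ) ^ (i + k) * (i.choose k : ℤ) *
        ∑ j ∈ Finset.Icc i ((n - i).choose 2), (j.choose i : ℤ) * (mahonian (n - i) j : ℤ) :=
  fishburnCoeff_eq_general n k
end

section
/- If u_{n,i} denotes the coefficient of x^n z^i in \sum_{m \ge 0} [m]_{xz+1}! x^m, then u_{n,i} = \sum_{j=i}^{\binom{n-i}{2}} \binom{j}{i} m_{n-i, j}. -/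
open Finset Polynomial

noncomputable def zVar : MvPolynomial (Fin 2) ℤ := MvPolynomial.X 1

/-- `u_{n,i}`: the coefficient of `x^n z^i` in `∑_{m ≥ 0} [m]_{xz+1}! x^m` (terms
with `m > n` do not contribute to the coefficient of `x^n`, so the sum may be
truncated at `m = n`). -/
noncomputable def unsieved (n i : ℕ) : ℤ :=
  MvPolynomial.coeff (Finsupp.single 0 n + Finsupp.single 1 i)
    (∑ m ∈ Finset.range (n + 1),
      Polynomial.aeval (xVar * zVar + 1) (qFactorial m) * xVar ^ m)

def insertPerm {m : ℕ} (k : Fin (m + 1)) (σ : Equiv.Perm (Fin m)) :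
    Equiv.Perm (Fin (m + 1)) :=
  finSuccEquivLast.trans ((Equiv.optionCongr σ).trans (finSuccEquiv' k).symm)

lemma insertPerm_castSucc {m : ℕ} (k : Fin (m + 1)) (σ : Equiv.Perm (Fin m)) (i : Fin m) :
    insertPerm k σ (Fin.castSucc i) = k.succAbove (σ i) := by
  simp [insertPerm]

lemma insertPerm_last {m : ℕ} (k : Fin (m + 1)) (σ : Equiv.Perm (Fin m)) :
    insertPerm k σ (Fin.last m) = k := by
  simp [insertPerm]

lemma sum_range_ite_le (K M : ℕ) :
    (∑ a ∈ Finset.range M, if K ≤ a then (1 : ℕ) else 0) = M - K := by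
  induction M with
  | zero => simp
  | succ M ih => rw [Finset.sum_range_succ, ih]; split_ifs with h <;> omega

lemma invCount_insertPerm {m : ℕ} (k : Fin (m + 1)) (σ : Equiv.Perm (Fin m)) :
    invCount (insertPerm k σ) = invCount σ + (m - k) := by
  classical
  rw [invCount, Finset.card_filter, Fintype.sum_prod_type, Fin.sum_univ_castSucc]
  have hlast : (∑ b : Fin (m + 1),
      if Fin.last m < b ∧ insertPerm k σ b < insertPerm k σ (Fin.last m) then (1:ℕ) else 0) = 0 := by
    apply Finset.sum_eq_zero
    intro b _
    simp [(Fin.le_last b).not_gt]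
  rw [hlast, add_zero]
  have hsplit : ∀ i : Fin m, (∑ b : Fin (m + 1),
      if Fin.castSucc i < b ∧ insertPerm k σ b < insertPerm k σ (Fin.castSucc i) then (1:ℕ) else 0)
      = (∑ j : Fin m, if i < j ∧ σ j < σ i then (1:ℕ) else 0)
        + (if k ≤ Fin.castSucc (σ i) then 1 else 0) := by
    intro i
    rw [Fin.sum_univ_castSucc]
    congr 1
    · apply Finset.sum_congr rfl
      intro j _
      simp only [insertPerm_castSucc, Fin.castSucc_lt_castSucc_iff,
        Fin.succAbove_lt_succAbove_iff]
    · rw [insertPerm_castSucc, insertPerm_last]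
      simp [Fin.castSucc_lt_last, Fin.lt_succAbove_iff_le_castSucc]
  rw [Finset.sum_congr rfl fun i _ => hsplit i, Finset.sum_add_distrib]
  congr 1
  · rw [invCount, Finset.card_filter, Fintype.sum_prod_type]
  · rw [Fintype.sum_equiv σ _ (fun a => if k ≤ Fin.castSucc a then (1:ℕ) else 0) (fun x => rfl)]
    have : ∀ a : Fin m, (if k ≤ Fin.castSucc a then (1:ℕ) else 0)
        = (fun t : ℕ => if (k : ℕ) ≤ t then (1:ℕ) else 0) (a : ℕ) := by
      intro a; simp [Fin.le_def]
    rw [Finset.sum_congr rfl fun a _ => this a]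
    exact (Fin.sum_univ_eq_sum_range (fun t => if (k:ℕ) ≤ t then (1:ℕ) else 0) m).trans
      (sum_range_ite_le k m)

lemma insertPerm_bijective (m : ℕ) :
    Function.Bijective (fun p : Fin (m + 1) × Equiv.Perm (Fin m) => insertPerm p.1 p.2) := by
  rw [Fintype.bijective_iff_injective_and_card]
  constructor
  · rintro ⟨k, σ⟩ ⟨k', σ'⟩ h
    simp only at h
    have hk : k = k' := by
      have := congrArg (fun π : Equiv.Perm (Fin (m+1)) => π (Fin.last m)) h
      simpa [insertPerm_last] using this
    subst hk
    have hσ : σ = σ' := by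
      ext i
      have := congrArg (fun π : Equiv.Perm (Fin (m+1)) => π (Fin.castSucc i)) h
      simp only [insertPerm_castSucc] at this
      exact congrArg Fin.val (Fin.succAbove_right_injective this)
    subst hσ; rfl
  · simp [Fintype.card_perm, Nat.factorial_succ]

lemma invCount_le {m : ℕ} (π : Equiv.Perm (Fin m)) : invCount π ≤ m.choose 2 := by
  induction m with
  | zero => simp [invCount]
  | succ m ih =>
    obtain ⟨⟨k, σ⟩, rfl⟩ := (insertPerm_bijective m).2 π
    rw [invCount_insertPerm]
    have : (m + 1).choose 2 = m.choose 1 + m.choose 2 := Nat.choose_succ_succ m 1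
    have h2 := ih (k, σ).2
    have h3 : m - (((k, σ).1 : Fin (m+1)) : ℕ) ≤ m := Nat.sub_le _ _
    simp only [Nat.choose_one_right] at this
    omega

lemma invGen {R : Type*} [CommRing R] (q : R) (m : ℕ) :
    (∏ i ∈ Finset.range m, ∑ j ∈ Finset.range (i + 1), q ^ j)
      = ∑ π : Equiv.Perm (Fin m), q ^ invCount π := by
  induction m with
  | zero => simp [invCount]
  | succ m ih =>
    rw [Finset.prod_range_succ, ih,
      ← Fintype.sum_bijective _ (insertPerm_bijective m) _ (fun π => q ^ invCount π) (fun p => rfl)]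
    rw [Fintype.sum_prod_type]
    have : ∀ k : Fin (m + 1), ∑ σ : Equiv.Perm (Fin m), q ^ invCount (insertPerm k σ)
        = (∑ σ : Equiv.Perm (Fin m), q ^ invCount σ) * q ^ (m - (k : ℕ)) := by
      intro k
      rw [Finset.sum_mul]
      exact Finset.sum_congr rfl fun σ _ => by rw [invCount_insertPerm, pow_add]
    rw [Finset.sum_congr rfl fun k _ => this k, ← Finset.mul_sum]
    congr 1
    rw [Fin.sum_univ_eq_sum_range (fun t => q ^ (m - t)) (m + 1),
      ← Finset.sum_range_reflect (fun j => q ^ j) (m + 1)]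
    exact Finset.sum_congr rfl fun j hj => by simp

lemma coeff_xz (n i a b : ℕ) :
    MvPolynomial.coeff (Finsupp.single 0 n + Finsupp.single 1 i) (xVar ^ a * zVar ^ b)
      = if a = n ∧ b = i then 1 else 0 := by
  rw [xVar, zVar, MvPolynomial.X_pow_eq_monomial, MvPolynomial.X_pow_eq_monomial,
    MvPolynomial.monomial_mul, MvPolynomial.coeff_monomial, one_mul]
  congr 1
  simp only [eq_iff_iff]
  constructor
  · intro h
    have h0 := DFunLike.congr_fun h (0 : Fin 2)
    have h1 := DFunLike.congr_fun h (1 : Fin 2)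
    simp [Finsupp.single_apply, Finsupp.add_apply] at h0 h1
    exact ⟨h0, h1⟩
  · rintro ⟨rfl, rfl⟩; rfl

lemma mahonian_eq (M j : ℕ) :
    mahonian M j = (Finset.univ.filter fun π : Equiv.Perm (Fin M) => invCount π = j).card := by
  rw [mahonian, Nat.card_eq_fintype_card, Fintype.card_subtype]

lemma group_sum (M i : ℕ) :
    (∑ π : Equiv.Perm (Fin M), ((invCount π).choose i : ℤ))
      = ∑ j ∈ Finset.Icc i (M.choose 2), (j.choose i : ℤ) * (mahonian M j : ℤ) := by
  classical
  rw [← Finset.sum_fiberwise_of_maps_to (g := invCount) (t := Finset.range (M.choose 2 + 1))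
    (fun π _ => Finset.mem_range.mpr (Nat.lt_succ_of_le (invCount_le π)))]
  rw [show (∑ j ∈ Finset.range (M.choose 2 + 1),
        ∑ π ∈ Finset.univ.filter fun π : Equiv.Perm (Fin M) => invCount π = j,
          ((invCount π).choose i : ℤ))
      = ∑ j ∈ Finset.range (M.choose 2 + 1), (j.choose i : ℤ) * (mahonian M j : ℤ) from ?_]
  · symm
    apply Finset.sum_subset
    · intro j hj
      rw [Finset.mem_Icc] at hj
      exact Finset.mem_range.mpr (Nat.lt_succ_of_le hj.2)
    · intro j hj hj'
      rw [Finset.mem_range] at hj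
      rw [Finset.mem_Icc] at hj'
      have : j < i := by omega
      rw [Nat.choose_eq_zero_of_lt this]
      simp
  · apply Finset.sum_congr rfl
    intro j _
    rw [mahonian_eq]
    have : (∑ π ∈ Finset.univ.filter fun π : Equiv.Perm (Fin M) => invCount π = j,
          ((invCount π).choose i : ℤ))
        = ∑ _π ∈ Finset.univ.filter fun π : Equiv.Perm (Fin M) => invCount π = j,
          (j.choose i : ℤ) :=
      Finset.sum_congr rfl fun π hπ => by rw [(Finset.mem_filter.mp hπ).2]
    rw [this, Finset.sum_const, nsmul_eq_mul, mul_comm]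

lemma coeff_pow_mul (n i m J : ℕ) :
    MvPolynomial.coeff (Finsupp.single 0 n + Finsupp.single 1 i)
      ((xVar * zVar + 1) ^ J * xVar ^ m)
    = if m + i = n then (J.choose i : ℤ) else 0 := by
  classical
  rw [add_pow, Finset.sum_mul, MvPolynomial.coeff_sum]
  have hterm : ∀ t : ℕ,
      (xVar * zVar) ^ t * 1 ^ (J - t) * (J.choose t : MvPolynomial (Fin 2) ℤ) * xVar ^ m
        = MvPolynomial.C ((J.choose t : ℤ)) * (xVar ^ (t + m) * zVar ^ t) := by
    intro t
    rw [MvPolynomial.C_eq_coe_nat]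
    ring
  have hc : ∀ t ∈ Finset.range (J + 1),
      MvPolynomial.coeff (Finsupp.single 0 n + Finsupp.single 1 i)
        ((xVar * zVar) ^ t * 1 ^ (J - t) * (J.choose t : MvPolynomial (Fin 2) ℤ) * xVar ^ m)
      = (J.choose t : ℤ) * (if t + m = n ∧ t = i then 1 else 0) := by
    intro t _
    rw [hterm, MvPolynomial.coeff_C_mul, coeff_xz]
  rw [Finset.sum_congr rfl hc]
  by_cases h : m + i = n
  · rw [if_pos h]
    have h2 : ∀ t ∈ Finset.range (J + 1),
        (J.choose t : ℤ) * (if t + m = n ∧ t = i then 1 else 0)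
          = if t = i then (J.choose t : ℤ) else 0 := by
      intro t _
      by_cases ht : t = i
      · subst ht; simp [show t + m = n by omega]
      · simp [ht]
    rw [Finset.sum_congr rfl h2, Finset.sum_ite_eq' (Finset.range (J + 1)) i
      (fun t => (J.choose t : ℤ))]
    split_ifs with hi
    · rfl
    · rw [Finset.mem_range] at hi
      rw [Nat.choose_eq_zero_of_lt (by omega)]
      simp
  · rw [if_neg h]
    apply Finset.sum_eq_zero
    intro t _
    have : ¬ (t + m = n ∧ t = i) := by rintro ⟨h1, rfl⟩; omega
    rw [if_neg this, mul_zero]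

lemma coeff_term (n i m : ℕ) :
    MvPolynomial.coeff (Finsupp.single 0 n + Finsupp.single 1 i)
      (Polynomial.aeval (xVar * zVar + 1) (qFactorial m) * xVar ^ m)
    = if m + i = n then (∑ π : Equiv.Perm (Fin m), ((invCount π).choose i : ℤ)) else 0 := by
  classical
  have hq : Polynomial.aeval (xVar * zVar + 1) (qFactorial m)
      = ∑ π : Equiv.Perm (Fin m), (xVar * zVar + 1) ^ invCount π := by
    rw [qFactorial, map_prod, ← invGen (xVar * zVar + 1) m]
    apply Finset.prod_congr rfl
    intro i' _
    rw [map_sum]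
    apply Finset.sum_congr rfl
    intro j _
    rw [map_pow, Polynomial.aeval_X]
  rw [hq, Finset.sum_mul, MvPolynomial.coeff_sum]
  have : ∀ π : Equiv.Perm (Fin m), π ∈ (Finset.univ : Finset (Equiv.Perm (Fin m))) →
      MvPolynomial.coeff (Finsupp.single 0 n + Finsupp.single 1 i)
        ((xVar * zVar + 1) ^ invCount π * xVar ^ m)
      = if m + i = n then ((invCount π).choose i : ℤ) else 0 :=
    fun π _ => coeff_pow_mul n i m (invCount π)
  rw [Finset.sum_congr rfl this]
  by_cases h : m + i = n <;> simp [h]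

/-- `u_{n,i} = ∑_{j=i}^{C(n-i,2)} C(j,i) m_{n-i,j}`. -/
theorem unsieved_eq (n i : ℕ) :
    unsieved n i =
      ∑ j ∈ Finset.Icc i ((n - i).choose 2), (j.choose i : ℤ) * (mahonian (n - i) j : ℤ) := by
  classical
  rw [unsieved, MvPolynomial.coeff_sum,
    Finset.sum_congr rfl (fun m _ => coeff_term n i m)]
  by_cases hi : i ≤ n
  · have h2 : ∀ m ∈ Finset.range (n + 1),
        (if m + i = n then (∑ π : Equiv.Perm (Fin m), ((invCount π).choose i : ℤ)) else 0)
        = if m = n - i then (∑ π : Equiv.Perm (Fin m), ((invCount π).choose i : ℤ)) else 0 :=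
      fun m _ => if_congr (by omega) rfl rfl
    rw [Finset.sum_congr rfl h2, Finset.sum_ite_eq' (Finset.range (n + 1)) (n - i)
      (fun m => ∑ π : Equiv.Perm (Fin m), ((invCount π).choose i : ℤ)),
      if_pos (Finset.mem_range.mpr (by omega))]
    exact group_sum (n - i) i
  · rw [Finset.sum_eq_zero (fun m hm => by
      rw [Finset.mem_range] at hm
      exact if_neg (by omega))]
    rw [Nat.sub_eq_zero_of_le (by omega), Finset.Icc_eq_empty (by rw [Nat.choose_zero_succ]; omega)]
    simp
end
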